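/- arXiv:2504.11197 — 5 statements merged into one kernel-verified Lean document; each statement's English description precedes it below -/
import Mathlib

section
/- Let p^l and p^r be probability mass functions on a finite type X, let η^l, η^r ≥ 0 with η^l + η^r = 1, let δ := 1 − Σ_{x∈X} min(p^l(x), p^r(x)), and let p := η^l·p^l + η^r·p^r (pointwise). Define the expected acceptance rate α(γ) := γ·(1 − η^r·δ) + (1 − γ)·Σ_{x∈X} p^l(x)·p(x) for γ ∈ [0,1]. Then α is monotone nondecreasing on [0,1]: for all 0 ≤ γ₁ ≤ γ₂ ≤ 1, α(γ₁) ≤ α(γ₂). In particular, α is maximized at γ = 1. -/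
open Finset

theorem stmt_1 {X : Type*} [Fintype X]
    (pl pr : X → ℝ)
    (hpl : ∀ x, 0 ≤ pl x) (hpr : ∀ x, 0 ≤ pr x)
    (hsl : ∑ x, pl x = 1) (hsr : ∑ x, pr x = 1)
    (ηl ηr : ℝ) (hηl : 0 ≤ ηl) (hηr : 0 ≤ ηr) (hη : ηl + ηr = 1)
    (α : ℝ → ℝ)
    (hα : ∀ γ, α γ = γ * (1 - ηr * (1 - ∑ x, min (pl x) (pr x))) +
      (1 - γ) * ∑ x, pl x * (ηl * pl x + ηr * pr x)) :
    (∀ γ₁ γ₂, 0 ≤ γ₁ → γ₁ ≤ γ₂ → γ₂ ≤ 1 → α γ₁ ≤ α γ₂) ∧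
      (∀ γ, 0 ≤ γ → γ ≤ 1 → α γ ≤ α 1) := by
  have hple : ∀ x, pl x ≤ 1 := by
    intro x
    calc pl x ≤ ∑ y, pl y := Finset.single_le_sum (fun y _ => hpl y) (mem_univ x)
    _ = 1 := hsl
  have hpre : ∀ x, pr x ≤ 1 := by
    intro x
    calc pr x ≤ ∑ y, pr y := Finset.single_le_sum (fun y _ => hpr y) (mem_univ x)
    _ = 1 := hsr
  have h1 : ∑ x, pl x * pl x ≤ 1 := by
    rw [← hsl]
    exact Finset.sum_le_sum fun x _ =>
      mul_le_of_le_one_right (hpl x) (hple x)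
  have h2 : ∑ x, pl x * pr x ≤ ∑ x, min (pl x) (pr x) := by
    refine Finset.sum_le_sum fun x _ => le_min ?_ ?_
    · exact mul_le_of_le_one_right (hpl x) (hpre x)
    · exact mul_le_of_le_one_left (hpr x) (hple x)
  have hsplit : ∑ x, pl x * (ηl * pl x + ηr * pr x)
      = ηl * ∑ x, pl x * pl x + ηr * ∑ x, pl x * pr x := by
    rw [Finset.mul_sum, Finset.mul_sum, ← Finset.sum_add_distrib]
    exact Finset.sum_congr rfl fun x _ => by ring
  have key : ∑ x, pl x * (ηl * pl x + ηr * pr x) ≤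
      1 - ηr * (1 - ∑ x, min (pl x) (pr x)) := by
    rw [hsplit]
    nlinarith [mul_le_mul_of_nonneg_left h1 hηl, mul_le_mul_of_nonneg_left h2 hηr]
  have mono : ∀ γ₁ γ₂, 0 ≤ γ₁ → γ₁ ≤ γ₂ → γ₂ ≤ 1 → α γ₁ ≤ α γ₂ := by
    intro γ₁ γ₂ _ h12 _
    rw [hα, hα]
    nlinarith [key, h12]
  exact ⟨mono, fun γ h0 h1 => mono γ 1 h0 h1 le_rfl⟩
end

section
/- Let p^l and p^r be probability mass functions on a finite type X, let η^l, η^r ≥ 0 with η^l + η^r = 1, and let δ := 1 − Σ_{x∈X} min(p^l(x), p^r(x)). Then Σ_{x∈X} min(p^l(x), η^l·p^l(x) + η^r·p^r(x)) = 1 − η^r·δ. -/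
open Finset

theorem stmt_4 {X : Type*} [Fintype X]
    (pl pr : X → ℝ)
    (hpl : ∀ x, 0 ≤ pl x) (hpr : ∀ x, 0 ≤ pr x)
    (hsl : ∑ x, pl x = 1) (hsr : ∑ x, pr x = 1)
    (ηl ηr : ℝ) (hηl : 0 ≤ ηl) (hηr : 0 ≤ ηr) (hη : ηl + ηr = 1) :
    ∑ x, min (pl x) (ηl * pl x + ηr * pr x) =
      1 - ηr * (1 - ∑ x, min (pl x) (pr x)) := by
  have key : ∀ x, min (pl x) (ηl * pl x + ηr * pr x)
      = ηl * pl x + ηr * min (pl x) (pr x) := by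
    intro x
    have h1 : ηl * pl x + ηr * pl x = pl x := by rw [← add_mul, hη, one_mul]
    rcases le_total (pl x) (pr x) with h | h
    · rw [min_eq_left h, min_eq_left, ← add_mul, hη, one_mul]
      linarith [mul_le_mul_of_nonneg_left h hηr]
    · rw [min_eq_right h, min_eq_right]
      linarith [mul_le_mul_of_nonneg_left h hηr]
  simp only [key]
  rw [Finset.sum_add_distrib, ← Finset.mul_sum, ← Finset.mul_sum, hsl]
  linarith
end

section
/- Let p^l and p^r be probability mass functions on a finite type X with p^l ≠ p^r, and let η^l, η^r ≥ 0 with η^l + η^r = 1. Let S := Σ_{y∈X} max(0, p^r(y) − p^l(y)); then S > 0, and for every x ∈ X: min(p^l(x), η^l·p^l(x) + η^r·p^r(x)) + (η^r · Σ_{y∈X} (p^l(y) − min(p^l(y), p^r(y)))) · (max(0, p^r(x) − p^l(x)) / S) = η^l·p^l(x) + η^r·p^r(x). Consequently, the speculative sampling process on side l (accept x ~ p^l with probability min(1, (η^l·p^l(x)+η^r·p^r(x))/p^l(x)), otherwise resample from the normalized distribution max(0, p^r − p^l)/S) produces a token distributed exactly as η^l·p^l + η^r·p^r. -/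
open Finset

theorem stmt_8 {X : Type*} [Fintype X]
    (pl pr : X → ℝ)
    (hpl : ∀ x, 0 ≤ pl x) (hpr : ∀ x, 0 ≤ pr x)
    (hsl : ∑ x, pl x = 1) (hsr : ∑ x, pr x = 1)
    (hne : pl ≠ pr)
    (ηl ηr : ℝ) (hηl : 0 ≤ ηl) (hηr : 0 ≤ ηr) (hη : ηl + ηr = 1) :
    0 < ∑ y, max 0 (pr y - pl y) ∧
      ∀ x, min (pl x) (ηl * pl x + ηr * pr x) +
          (ηr * ∑ y, (pl y - min (pl y) (pr y))) *
            (max 0 (pr x - pl x) / ∑ y, max 0 (pr y - pl y)) =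
        ηl * pl x + ηr * pr x := by
  have hpos : 0 < ∑ y, max 0 (pr y - pl y) := by
    have hnn : (0:ℝ) ≤ ∑ y, max 0 (pr y - pl y) :=
      Finset.sum_nonneg fun y _ => le_max_left _ _
    rcases hnn.lt_or_eq with h | h
    · exact h
    · exfalso
      have hall : ∀ y ∈ Finset.univ, max 0 (pr y - pl y) = 0 := by
        intro y _
        have := (Finset.sum_eq_zero_iff_of_nonneg
          (fun y _ => le_max_left 0 (pr y - pl y))).1 h.symm
        exact this y (Finset.mem_univ y)
      have hle : ∀ y, pr y ≤ pl y := by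
        intro y
        have hm := hall y (Finset.mem_univ y)
        by_contra hc
        push_neg at hc
        rw [max_eq_right (by linarith : (0:ℝ) ≤ pr y - pl y)] at hm
        linarith
      have hzero : ∑ y, (pl y - pr y) = 0 := by
        rw [Finset.sum_sub_distrib, hsl, hsr]; ring
      have heq : ∀ y ∈ Finset.univ, pl y - pr y = 0 :=
        (Finset.sum_eq_zero_iff_of_nonneg (fun y _ => by linarith [hle y])).1 hzero
      apply hne
      funext y
      have := heq y (Finset.mem_univ y)
      linarith
  refine ⟨hpos, fun x => ?_⟩
  have hkey : ∑ y, (pl y - min (pl y) (pr y)) = ∑ y, max 0 (pr y - pl y) := by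
    have : ∀ y, pl y - min (pl y) (pr y) = max 0 (pr y - pl y) + (pl y - pr y) := by
      intro y
      rcases le_total (pl y) (pr y) with h | h
      · rw [min_eq_left h, max_eq_right (by linarith)]; ring
      · rw [min_eq_right h, max_eq_left (by linarith)]; ring
    rw [Finset.sum_congr rfl (fun y _ => this y), Finset.sum_add_distrib,
      Finset.sum_sub_distrib, hsl, hsr]
    ring
  rw [hkey]
  have hS := hpos.ne'
  have hterm : (ηr * ∑ y, max 0 (pr y - pl y)) *
      (max 0 (pr x - pl x) / ∑ y, max 0 (pr y - pl y)) = ηr * max 0 (pr x - pl x) := by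
    field_simp
  rw [hterm]
  have hcomb : ηl * pl x + ηr * pr x = pl x + ηr * (pr x - pl x) := by
    rw [show ηl = 1 - ηr from by linarith]; ring
  rcases le_total (pl x) (pr x) with h | h
  · rw [max_eq_right (by linarith),
      min_eq_left (by rw [hcomb]; nlinarith [mul_nonneg hηr (sub_nonneg.2 h)])]
    linarith [hcomb]
  · rw [max_eq_left (by linarith),
      min_eq_right (by rw [hcomb]; nlinarith [mul_nonneg hηr (sub_nonneg.2 h)])]
    ring
end

section
/- Let c^l, c^r ≥ 0, rtt > 0 and α ∈ [0,1]. Define Z := α·max(c^l, c^r) + (1 − α)·max(c^l, c^r + rtt) and Z̃ := max(c^l, c^r + rtt). If c^l ≤ c^r, then Z / Z̃ = 1 − α / (1 + c^r / rtt). -/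
theorem stmt_9 (cl cr rtt α : ℝ)
    (hcl : 0 ≤ cl) (hcr : 0 ≤ cr) (hrtt : 0 < rtt)
    (hα0 : 0 ≤ α) (hα1 : α ≤ 1)
    (h : cl ≤ cr) :
    (α * max cl cr + (1 - α) * max cl (cr + rtt)) / max cl (cr + rtt) =
      1 - α / (1 + cr / rtt) := by
  rw [max_eq_right h, max_eq_right (by linarith)]
  have h1 : cr + rtt ≠ 0 := by positivity
  have h2 : (1 : ℝ) + cr / rtt ≠ 0 := by positivity
  field_simp
  ring
end

section
/- Let c^l, c^r ≥ 0, rtt ≥ 0, and α^l, α^r ∈ [0,1]. Define Z^l := α^r·max(c^l, c^r) + (1 − α^r)·max(c^l, c^r + rtt) and Z^r := α^l·max(c^r, c^l) + (1 − α^l)·max(c^r, c^l + rtt), and ΔZ := Z^l − Z^r. If c^r + rtt < c^l, then ΔZ = (α^l − 1)·rtt. In particular, ΔZ ≤ 0, so aggregation on side l is never worse in this regime. -/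
theorem stmt_17 (cl cr rtt αl αr : ℝ)
    (hcl : 0 ≤ cl) (hcr : 0 ≤ cr) (hrtt : 0 ≤ rtt)
    (hαl0 : 0 ≤ αl) (hαl1 : αl ≤ 1) (hαr0 : 0 ≤ αr) (hαr1 : αr ≤ 1)
    (h : cr + rtt < cl) :
    (αr * max cl cr + (1 - αr) * max cl (cr + rtt)) -
        (αl * max cr cl + (1 - αl) * max cr (cl + rtt)) =
      (αl - 1) * rtt ∧
    (αr * max cl cr + (1 - αr) * max cl (cr + rtt)) -
        (αl * max cr cl + (1 - αl) * max cr (cl + rtt)) ≤ 0 := by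
  have h1 : max cl cr = cl := max_eq_left (by linarith)
  have h2 : max cl (cr + rtt) = cl := max_eq_left (le_of_lt h)
  have h3 : max cr cl = cl := max_eq_right (by linarith)
  have h4 : max cr (cl + rtt) = cl + rtt := max_eq_right (by linarith)
  rw [h1, h2, h3, h4]
  constructor
  · ring
  · nlinarith
end
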